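/- Let X be a set of density matrices on n qudits, and let E be any finite composition of deletion and insertion error operations E = I^{t_1}∘D^{s_1}∘⋯∘I^{t_k}∘D^{s_k} with Σ s_i = s and Σ t_i = t. Then E(X) ⊆ I^t(D^s(X)). -/

import Mathlib

open Matrix
open scoped ComplexOrder

/-- Matrices on `n` qudits of level `l`. -/
abbrev QMat (l n : ℕ) := Matrix (Fin n → Fin l) (Fin n → Fin l) ℂ

/-- A quantum state on some finite number of qudits. -/
def QState (l : ℕ) := Σ n : ℕ, QMat l n

/-- Density matrix: positive semidefinite with trace 1. -/
def IsDensity {l n : ℕ} (ρ : QMat l n) : Prop := ρ.PosSemidef ∧ ρ.trace = 1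

def IsDensityS {l : ℕ} (ρ : QState l) : Prop := ρ.2.PosSemidef ∧ ρ.2.trace = 1

/-- Partial trace over the qudit at position `p`. -/
noncomputable def traceOut {l n : ℕ} (p : Fin (n + 1)) (ρ : QMat l (n + 1)) : QMat l n :=
  fun x y => ∑ z : Fin l, ρ (p.insertNth z x) (p.insertNth z y)

/-- Single deletion: all states obtained by tracing out one qudit. -/
def del1 {l : ℕ} : QState l → Set (QState l)
  | ⟨0, _⟩ => ∅
  | ⟨n + 1, ρ⟩ => { σ | ∃ p : Fin (n + 1), σ = ⟨n, traceOut p ρ⟩ }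

/-- Single insertion sphere: density matrices having `ρ` among their single deletions. -/
def ins1 {l : ℕ} (ρ : QState l) : Set (QState l) :=
  { σ | IsDensityS σ ∧ ρ ∈ del1 σ }

def delSet {l : ℕ} (X : Set (QState l)) : Set (QState l) := ⋃ ρ ∈ X, del1 ρ
def insSet {l : ℕ} (X : Set (QState l)) : Set (QState l) := ⋃ ρ ∈ X, ins1 ρ

/-- `s`-deletion errors. -/
def Dq {l : ℕ} : ℕ → Set (QState l) → Set (QState l)
  | 0, X => X
  | s + 1, X => delSet (Dq s X)

/-- `t`-insertion errors. -/
def Iq {l : ℕ} : ℕ → Set (QState l) → Set (QState l)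
  | 0, X => X
  | t + 1, X => insSet (Iq t X)

/-- Quantum indel distance. -/
noncomputable def qdist {l : ℕ} (ρ₁ ρ₂ : QState l) : ℕ :=
  sInf { k | ∃ s t : ℕ, s + t = k ∧ (Dq s {ρ₁} ∩ Dq t {ρ₂}).Nonempty }

/-- The composite error `I^{t₁}∘D^{s₁}∘⋯∘I^{t_k}∘D^{s_k}` applied to `X`
(rightmost factor first). -/
def compDI {l : ℕ} (L : List (ℕ × ℕ)) (X : Set (QState l)) : Set (QState l) :=
  L.foldr (fun st Y => Iq st.2 (Dq st.1 Y)) X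

/-! A single deletion applied after a single insertion either undoes it or, since partial traces
over distinct qudits commute, can be performed before it. In the first case the state is recovered
anyway by deleting and re-inserting a qudit, which is possible because partial traces of density
matrices are density matrices. Hence `D^a ∘ I^b ⊆ I^b ∘ D^a` on density states with at least `a`
qudits, and all deletions of the composite error can be moved to the right of all insertions. -/

theorem Fin.insertNth_insertNth_eq_swap {α : Type*} {n : ℕ} (p : Fin (n + 2)) (j : Fin (n + 1))
    (a b : α) (x : Fin n → α) :
    p.insertNth (α := fun _ => α) a (j.insertNth (α := fun _ => α) b x) =
      (p.succAbove j).insertNth (α := fun _ => α) b ((j.predAbove p).insertNth a x) := by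
  funext r
  rcases eq_or_ne r p with rfl | hrp
  · have h := succAbove_succAbove_predAbove r j
    set q := r.succAbove j
    set i := j.predAbove r
    rw [insertNth_apply_same, ← h]
    simp
  obtain ⟨k, rfl⟩ := exists_succAbove_eq hrp
  rcases eq_or_ne k j with rfl | hkj
  · simp
  obtain ⟨k', rfl⟩ := exists_succAbove_eq hkj
  conv_rhs => rw [← succAbove_succAbove_succAbove_predAbove]
  simp

section PartialTrace

variable {l n : ℕ}

theorem traceOut_eq_sum_submatrix (p : Fin (n + 1)) (ρ : QMat l (n + 1)) :
    traceOut p ρ = ∑ z : Fin l, ρ.submatrix (p.insertNth z) (p.insertNth z) := by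
  ext x y
  simp [traceOut, Matrix.sum_apply]

theorem Matrix.PosSemidef.traceOut {ρ : QMat l (n + 1)} (h : ρ.PosSemidef) (p : Fin (n + 1)) :
    (traceOut p ρ).PosSemidef :=
  traceOut_eq_sum_submatrix p ρ ▸ posSemidef_sum _ fun _ _ => h.submatrix _

theorem trace_traceOut (p : Fin (n + 1)) (ρ : QMat l (n + 1)) :
    (traceOut p ρ).trace = ρ.trace := by
  simp only [trace, diag_apply, traceOut]
  rw [Finset.sum_comm, ← Fintype.sum_prod_type', ← (Fin.insertNthEquiv (fun _ => Fin l) p).sum_comp]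
  rfl

theorem traceOut_traceOut_eq_swap (p : Fin (n + 2)) (j : Fin (n + 1)) (ρ : QMat l (n + 2)) :
    traceOut j (traceOut p ρ) = traceOut (j.predAbove p) (traceOut (p.succAbove j) ρ) := by
  ext x y
  simp only [traceOut, Fin.insertNth_insertNth_eq_swap p j]
  exact Finset.sum_comm

end PartialTrace

section SingleDeletion

variable {l : ℕ}

theorem fst_eq_of_mem_del1 {ρ σ : QState l} (h : σ ∈ del1 ρ) : ρ.1 = σ.1 + 1 := by
  obtain ⟨_ | m, M⟩ := ρ
  · exact h.elim
  · obtain ⟨p, rfl⟩ := h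
    rfl

theorem IsDensityS.of_mem_del1 {ρ σ : QState l} (hρ : IsDensityS ρ) (h : σ ∈ del1 ρ) :
    IsDensityS σ := by
  obtain ⟨_ | m, M⟩ := ρ
  · exact h.elim
  · obtain ⟨p, rfl⟩ := h
    exact ⟨hρ.1.traceOut p, (trace_traceOut p M).trans hρ.2⟩

theorem eq_or_del1_inter_nonempty {σ ρ τ : QState l} (hρ : ρ ∈ del1 σ) (hτ : τ ∈ del1 σ) :
    τ = ρ ∨ (del1 ρ ∩ del1 τ).Nonempty := by
  obtain ⟨_ | m, M⟩ := σ
  · exact hρ.elim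
  obtain ⟨p, rfl⟩ := hρ
  obtain ⟨q, rfl⟩ := hτ
  rcases eq_or_ne q p with rfl | hqp
  · exact .inl rfl
  obtain ⟨_ | m⟩ := m
  · exact absurd (Subsingleton.elim (α := Fin 1) q p) hqp
  obtain ⟨j, rfl⟩ := Fin.exists_succAbove_eq hqp
  exact .inr ⟨_, ⟨j, rfl⟩, ⟨j.predAbove p, by rw [traceOut_traceOut_eq_swap p j M]⟩⟩

end SingleDeletion

section ErrorSets

variable {l : ℕ}

theorem delSet_mono : Monotone (delSet (l := l)) :=
  fun _ _ h => Set.biUnion_subset_biUnion_left h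

theorem insSet_mono : Monotone (insSet (l := l)) :=
  fun _ _ h => Set.biUnion_subset_biUnion_left h

theorem Dq_mono (s : ℕ) : Monotone (Dq (l := l) s) := by
  induction s with
  | zero => exact monotone_id
  | succ s ih => exact delSet_mono.comp ih

theorem Iq_mono (t : ℕ) : Monotone (Iq (l := l) t) := by
  induction t with
  | zero => exact monotone_id
  | succ t ih => exact insSet_mono.comp ih

theorem Dq_add (a b : ℕ) (X : Set (QState l)) : Dq (a + b) X = Dq a (Dq b X) := by
  induction a with
  | zero => rw [Nat.zero_add]; rfl
  | succ a ih => rw [Nat.succ_add, Dq, ih, Dq]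

theorem Iq_add (a b : ℕ) (X : Set (QState l)) : Iq (a + b) X = Iq a (Iq b X) := by
  induction a with
  | zero => rw [Nat.zero_add]; rfl
  | succ a ih => rw [Nat.succ_add, Iq, ih, Iq]

def DensityOnAtLeast (k : ℕ) (Z : Set (QState l)) : Prop :=
  ∀ σ ∈ Z, IsDensityS σ ∧ k ≤ σ.1

theorem DensityOnAtLeast.mono {k k' : ℕ} {Z : Set (QState l)} (h : DensityOnAtLeast k' Z)
    (hk : k ≤ k') : DensityOnAtLeast k Z :=
  fun σ hσ => ⟨(h σ hσ).1, hk.trans (h σ hσ).2⟩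

theorem DensityOnAtLeast.Dq {a k : ℕ} {Z : Set (QState l)} (h : DensityOnAtLeast (a + k) Z) :
    DensityOnAtLeast k (Dq a Z) := by
  induction a generalizing k with
  | zero => rwa [Nat.zero_add] at h
  | succ a ih =>
    intro σ hσ
    obtain ⟨ρ, hρ, hσρ⟩ := Set.mem_iUnion₂.1 hσ
    have hρ' := ih (k := k + 1) (h.mono (by omega)) ρ hρ
    exact ⟨hρ'.1.of_mem_del1 hσρ, by have := fst_eq_of_mem_del1 hσρ; omega⟩

theorem DensityOnAtLeast.Iq {k : ℕ} {Z : Set (QState l)} (h : DensityOnAtLeast k Z) (b : ℕ) :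
    DensityOnAtLeast k (Iq b Z) := by
  induction b with
  | zero => exact h
  | succ b ih =>
    intro σ hσ
    obtain ⟨ρ, hρ, hσd, hρσ⟩ := Set.mem_iUnion₂.1 hσ
    exact ⟨hσd, by have := (ih ρ hρ).2; have := fst_eq_of_mem_del1 hρσ; omega⟩

theorem subset_insSet_delSet {Z : Set (QState l)} (hZ : DensityOnAtLeast 1 Z) :
    Z ⊆ insSet (delSet Z) := by
  rintro ⟨_ | m, M⟩ hρ
  · exact absurd (hZ _ hρ).2 (Nat.not_succ_le_zero 0)
  exact Set.mem_biUnion (Set.mem_biUnion hρ ⟨0, rfl⟩) ⟨(hZ _ hρ).1, 0, rfl⟩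

theorem delSet_insSet_subset {Z : Set (QState l)} (hZ : DensityOnAtLeast 1 Z) :
    delSet (insSet Z) ⊆ insSet (delSet Z) := by
  intro τ hτ
  obtain ⟨σ, hσ, hτσ⟩ := Set.mem_iUnion₂.1 hτ
  obtain ⟨ρ, hρ, hσd, hρσ⟩ := Set.mem_iUnion₂.1 hσ
  rcases eq_or_del1_inter_nonempty hρσ hτσ with rfl | ⟨τ', hτ'ρ, hτ'τ⟩
  · exact subset_insSet_delSet hZ hρ
  · exact Set.mem_biUnion (Set.mem_biUnion hρ hτ'ρ) ⟨hσd.of_mem_del1 hτσ, hτ'τ⟩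

theorem Dq_insSet_subset {a : ℕ} {Z : Set (QState l)} (hZ : DensityOnAtLeast a Z) :
    Dq a (insSet Z) ⊆ insSet (Dq a Z) := by
  induction a with
  | zero => exact subset_rfl
  | succ a ih =>
    calc delSet (Dq a (insSet Z))
        ⊆ delSet (insSet (Dq a Z)) := delSet_mono (ih (hZ.mono a.le_succ))
      _ ⊆ insSet (delSet (Dq a Z)) := delSet_insSet_subset hZ.Dq

theorem Dq_Iq_subset {a : ℕ} {Z : Set (QState l)} (hZ : DensityOnAtLeast a Z) (b : ℕ) :
    Dq a (Iq b Z) ⊆ Iq b (Dq a Z) := by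
  induction b with
  | zero => exact subset_rfl
  | succ b ih =>
    calc Dq a (insSet (Iq b Z))
        ⊆ insSet (Dq a (Iq b Z)) := Dq_insSet_subset (hZ.Iq b)
      _ ⊆ insSet (Iq b (Dq a Z)) := insSet_mono ih

theorem compDI_subset_Iq_Dq (L : List (ℕ × ℕ)) {X : Set (QState l)}
    (hX : DensityOnAtLeast (L.map Prod.fst).sum X) :
    compDI L X ⊆ Iq (L.map Prod.snd).sum (Dq (L.map Prod.fst).sum X) := by
  induction L with
  | nil => exact subset_rfl
  | cons st L ih =>
    simp only [List.map_cons, List.sum_cons] at hX ⊢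
    calc Iq st.2 (Dq st.1 (compDI L X))
        ⊆ Iq st.2 (Dq st.1 (Iq (L.map Prod.snd).sum (Dq (L.map Prod.fst).sum X))) :=
          Iq_mono _ (Dq_mono _ (ih (hX.mono (Nat.le_add_left _ _))))
      _ ⊆ Iq st.2 (Iq (L.map Prod.snd).sum (Dq st.1 (Dq (L.map Prod.fst).sum X))) :=
          Iq_mono _ (Dq_Iq_subset (DensityOnAtLeast.Dq (by rwa [Nat.add_comm])) _)
      _ = Iq (st.2 + (L.map Prod.snd).sum) (Dq (st.1 + (L.map Prod.fst).sum) X) := by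
          rw [Iq_add, Dq_add]

end ErrorSets

/-- Any finite composition of deletion and insertion errors with `s` deletions
and `t` insertions in total is contained in `I^t ∘ D^s`. -/
theorem compDI_subset_ins_dels {l n s t : ℕ} (hsn : s ≤ n)
    (X : Set (QState l)) (hX : ∀ ρ ∈ X, ρ.1 = n ∧ IsDensityS ρ)
    (L : List (ℕ × ℕ))
    (hs : (L.map Prod.fst).sum = s) (ht : (L.map Prod.snd).sum = t) :
    compDI L X ⊆ Iq t (Dq s X) := by
  subst hs ht
  exact compDI_subset_Iq_Dq L fun ρ hρ => ⟨(hX ρ hρ).2, (hX ρ hρ).1 ▸ hsn⟩
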